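/- Let d ≥ 1, ε ∈ (0,1), and let P, Q ∈ ℂ[z] be polynomials of degree at most d with |P(z)|² + |Q(z)|² = 1 for all z ∈ 𝕋, with monomial coefficients pₙ and qₙ (0 ≤ n ≤ d, set to 0 outside this range). Suppose q̃₀, …, q̃_d ∈ ℂ satisfy |qₙ − q̃ₙ| < ε for all 0 ≤ n ≤ d, and set Q̃(z) := Σ_{n=0}^{d} q̃ₙ zⁿ. Then Φ(P,Q̃) < (d+1)(d+3)·ε and Φ̃(P,Q̃) < 3(d+1)(2d+1)·ε. -/

import Mathlib

/-! On `𝕋` the perturbation changes `Q` by at most `Σ |qₙ - q̃ₙ| < (d+1)ε`, and there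
`|P|² + |Q̃|² - 1 = |Q̃|² - |Q|²`; this gives the bound on `Φ`. For `Φ̃`: the polynomial
`zᵈ (P(z) P̄(1/z) + Q(z) Q̄(1/z) - 1)`, with `P̄` the polynomial with conjugated coefficients,
vanishes on the infinite set `𝕋`, hence is zero. Its coefficients are the correlation sums of
`Φ̃(P,Q)`, so these vanish, and the `n = 0` one gives `|qₙ| ≤ 1`. Each correlation sum of `(P,Q̃)`
therefore differs from `δₙ₀` only through the `Q`-part, by at most `(d+1)(2+ε)ε`, and the `2d+1`
of them have `ℓ²`-norm at most `2d+1` times that. -/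

/-- The coefficient sequence of a polynomial extended by zero to all integer indices. -/
noncomputable def coeffExt (P : Polynomial ℂ) (n : ℤ) : ℂ :=
  if 0 ≤ n then P.coeff n.toNat else 0

open Polynomial Finset

lemma coeffExt_natCast (A : ℂ[X]) (m : ℕ) : coeffExt A m = A.coeff m := by
  simp [coeffExt]

lemma coeffExt_sub (A B : ℂ[X]) (n : ℤ) : coeffExt (A - B) n = coeffExt A n - coeffExt B n := by
  unfold coeffExt
  split_ifs <;> simp

lemma norm_coeffExt_le {A : ℂ[X]} {c : ℝ} (h : ∀ m, ‖A.coeff m‖ ≤ c) (n : ℤ) :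
    ‖coeffExt A n‖ ≤ c := by
  unfold coeffExt
  split_ifs
  · exact h _
  · simpa using (norm_nonneg _).trans (h 0)

lemma coeff_sum_range_C_mul_X_pow {R : Type*} [Semiring R] (c : ℕ → R) (d n : ℕ) :
    (∑ k ∈ range (d + 1), C (c k) * X ^ k).coeff n = if n ≤ d then c n else 0 := by
  simp [finsetSum_coeff]

lemma norm_eval_le_sum_norm_coeff {𝕜 : Type*} [NormedField 𝕜] {A : 𝕜[X]} {d : ℕ}
    (hA : A.natDegree ≤ d) {z : 𝕜} (hz : ‖z‖ ≤ 1) :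
    ‖A.eval z‖ ≤ ∑ n ∈ range (d + 1), ‖A.coeff n‖ := by
  rw [eval_eq_sum_range' (Nat.lt_succ_of_le hA)]
  refine (norm_sum_le _ _).trans (sum_le_sum fun n _ => ?_)
  rw [norm_mul, norm_pow]
  exact mul_le_of_le_one_right (norm_nonneg _) (pow_le_one₀ (norm_nonneg _) hz)

lemma abs_norm_sq_sub_norm_sq_le {E : Type*} [SeminormedAddCommGroup E] {a b : E}
    (hb : ‖b‖ ≤ 1) : |‖a‖ ^ 2 - ‖b‖ ^ 2| ≤ ‖a - b‖ * (2 + ‖a - b‖) := by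
  have hdiff : |‖a‖ - ‖b‖| ≤ ‖a - b‖ := abs_norm_sub_norm_le a b
  have hsum : ‖a‖ + ‖b‖ ≤ 2 + ‖a - b‖ := by
    linarith [norm_le_norm_add_norm_sub' a b]
  rw [show ‖a‖ ^ 2 - ‖b‖ ^ 2 = (‖a‖ - ‖b‖) * (‖a‖ + ‖b‖) by ring, abs_mul,
    abs_of_nonneg (by positivity : 0 ≤ ‖a‖ + ‖b‖)]
  exact mul_le_mul hdiff hsum (by positivity) (norm_nonneg _)

lemma norm_mul_sub_mul_le {R : Type*} [NormedRing R] {a a' b b' : R} {ε : ℝ}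
    (ha : ‖a‖ ≤ 1) (hb : ‖b‖ ≤ 1) (ha' : ‖a' - a‖ ≤ ε) (hb' : ‖b' - b‖ ≤ ε) :
    ‖a' * b' - a * b‖ ≤ (2 + ε) * ε := by
  have hε : 0 ≤ ε := (norm_nonneg _).trans ha'
  have hb'_le : ‖b'‖ ≤ 1 + ε := by linarith [norm_le_norm_add_norm_sub' b' b]
  calc ‖a' * b' - a * b‖ = ‖(a' - a) * b' + a * (b' - b)‖ := by noncomm_ring
    _ ≤ ‖a' - a‖ * ‖b'‖ + ‖a‖ * ‖b' - b‖ :=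
      (norm_add_le _ _).trans (add_le_add (norm_mul_le _ _) (norm_mul_le _ _))
    _ ≤ ε * (1 + ε) + 1 * ε := by gcongr
    _ = (2 + ε) * ε := by ring

lemma sqrt_sum_norm_sq_le_card_mul {ι E : Type*} [SeminormedAddCommGroup E] (s : Finset ι)
    (f : ι → E) {B : ℝ} (h : ∀ i ∈ s, ‖f i‖ ≤ B) : √(∑ i ∈ s, ‖f i‖ ^ 2) ≤ #s * B := by
  rcases s.eq_empty_or_nonempty with rfl | ⟨i, hi⟩
  · simp
  have hB : 0 ≤ B := (norm_nonneg _).trans (h i hi)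
  rw [Real.sqrt_le_left (by positivity)]
  calc ∑ i ∈ s, ‖f i‖ ^ 2 ≤ ∑ _i ∈ s, B ^ 2 :=
        sum_le_sum fun i hi => pow_le_pow_left₀ (norm_nonneg _) (h i hi) 2
    _ = #s * B ^ 2 := by rw [sum_const, nsmul_eq_mul]
    _ ≤ (#s * B) ^ 2 := by
        rw [mul_pow]
        gcongr
        exact_mod_cast Nat.le_self_pow two_ne_zero _

lemma iSup_abs_norm_sq_add_norm_sq_sub_one_le {P Q Q' : ℂ[X]} {S : ℝ}
    (hPQ : ∀ z : ℂ, ‖z‖ = 1 → ‖P.eval z‖ ^ 2 + ‖Q.eval z‖ ^ 2 = 1)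
    (hS : ∀ z : ℂ, ‖z‖ = 1 → ‖Q'.eval z - Q.eval z‖ ≤ S) :
    (⨆ z : {z : ℂ // ‖z‖ = 1}, |‖P.eval z.1‖ ^ 2 + ‖Q'.eval z.1‖ ^ 2 - 1|) ≤ S * (2 + S) := by
  have hS0 : 0 ≤ S := (norm_nonneg _).trans (hS 1 norm_one)
  refine Real.iSup_le (fun ⟨z, hz⟩ => ?_) (by positivity)
  have hQ : ‖Q.eval z‖ ≤ 1 := by nlinarith [hPQ z hz, norm_nonneg (P.eval z)]
  rw [show ‖P.eval z‖ ^ 2 + ‖Q'.eval z‖ ^ 2 - 1 = ‖Q'.eval z‖ ^ 2 - ‖Q.eval z‖ ^ 2 by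
    linarith [hPQ z hz]]
  calc _ ≤ ‖Q'.eval z - Q.eval z‖ * (2 + ‖Q'.eval z - Q.eval z‖) :=
        abs_norm_sq_sub_norm_sq_le hQ
    _ ≤ S * (2 + S) := by have := hS z hz; gcongr

lemma eq_zero_of_eval_eq_zero_of_norm_eq_one {R : ℂ[X]} (h : ∀ z : ℂ, ‖z‖ = 1 → R.eval z = 0) :
    R = 0 := by
  have hcircle : {z : ℂ | ‖z‖ = 1}.Infinite := by
    have := (isPreconnected_sphere (E := ℂ) (by simp [Complex.rank_real_complex]) 0 1)
      |>.infinite_of_nontrivial ⟨1, by simp, -1, by simp, by norm_num⟩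
    simpa [Metric.sphere] using this
  exact eq_zero_of_infinite_isRoot R (hcircle.mono h)

noncomputable def coeffCorrelation (d : ℕ) (A : ℂ[X]) (n : ℤ) : ℂ :=
  ∑ m ∈ range (d + 1), coeffExt A (n + m) * starRingEnd ℂ (coeffExt A m)

noncomputable def conjReverse (d : ℕ) (A : ℂ[X]) : ℂ[X] :=
  ∑ m ∈ range (d + 1), C (starRingEnd ℂ (A.coeff m)) * X ^ (d - m)

lemma eval_conjReverse {A : ℂ[X]} {d : ℕ} (hA : A.natDegree ≤ d) {z : ℂ} (hz : ‖z‖ = 1) :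
    (conjReverse d A).eval z = z ^ d * starRingEnd ℂ (A.eval z) := by
  have hz0 : z ≠ 0 := by rintro rfl; simp at hz
  have hconj : starRingEnd ℂ z = z⁻¹ := by
    rw [Complex.inv_def, Complex.normSq_eq_norm_sq, hz]; simp
  rw [conjReverse, eval_finsetSum, eval_eq_sum_range' (Nat.lt_succ_of_le hA), map_sum, mul_sum]
  refine sum_congr rfl fun m hm => ?_
  have hmd : m ≤ d := Nat.lt_succ_iff.mp (mem_range.mp hm)
  rw [eval_C_mul, eval_X_pow, map_mul, map_pow, hconj, pow_sub₀ z hz0 hmd, inv_pow]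
  ring

lemma coeff_mul_conjReverse (A : ℂ[X]) (d k : ℕ) :
    (A * conjReverse d A).coeff k = coeffCorrelation d A (k - d) := by
  rw [conjReverse, mul_sum, finsetSum_coeff, coeffCorrelation]
  refine sum_congr rfl fun m hm => ?_
  have hmd : m ≤ d := Nat.lt_succ_iff.mp (mem_range.mp hm)
  rw [show A * (C (starRingEnd ℂ (A.coeff m)) * X ^ (d - m))
      = C (starRingEnd ℂ (A.coeff m)) * (X ^ (d - m) * A) by ring,
    coeff_C_mul, coeff_X_pow_mul', coeffExt_natCast, coeffExt]
  by_cases hk : d - m ≤ k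
  · rw [if_pos hk, if_pos (by omega), show ((k : ℤ) - d + m).toNat = k - (d - m) by omega,
      mul_comm]
  · rw [if_neg hk, if_neg (by omega)]
    simp

lemma coeffCorrelation_add_coeffCorrelation {P Q : ℂ[X]} {d : ℕ} (hP : P.natDegree ≤ d)
    (hQ : Q.natDegree ≤ d) (hPQ : ∀ z : ℂ, ‖z‖ = 1 → ‖P.eval z‖ ^ 2 + ‖Q.eval z‖ ^ 2 = 1)
    {n : ℤ} (hn : -(d : ℤ) ≤ n) :
    coeffCorrelation d P n + coeffCorrelation d Q n = if n = 0 then 1 else 0 := by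
  have hzero : P * conjReverse d P + Q * conjReverse d Q - X ^ d = 0 := by
    refine eq_zero_of_eval_eq_zero_of_norm_eq_one fun z hz => ?_
    have hsq : ((‖P.eval z‖ ^ 2 + ‖Q.eval z‖ ^ 2 : ℝ) : ℂ) = 1 := by rw [hPQ z hz]; simp
    simp only [eval_sub, eval_add, eval_mul, eval_pow, eval_X, eval_conjReverse hP hz,
      eval_conjReverse hQ hz]
    push_cast at hsq
    rw [← Complex.conj_mul', ← Complex.conj_mul'] at hsq
    linear_combination z ^ d * hsq
  have hcoeff := congrArg (coeff · (n + d).toNat) hzero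
  simp only [coeff_sub, coeff_add, coeff_mul_conjReverse, coeff_X_pow, coeff_zero] at hcoeff
  rw [show ((n + d).toNat : ℤ) - d = n by omega] at hcoeff
  simpa [show (n + d).toNat = d ↔ n = 0 by omega] using sub_eq_zero.mp hcoeff

lemma coeffCorrelation_zero (d : ℕ) (A : ℂ[X]) :
    coeffCorrelation d A 0 = ∑ m ∈ range (d + 1), ((‖A.coeff m‖ ^ 2 : ℝ) : ℂ) := by
  refine sum_congr rfl fun m _ => ?_
  rw [zero_add, coeffExt_natCast, Complex.mul_conj, Complex.normSq_eq_norm_sq]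

lemma norm_coeff_le_one_of_complementary {P Q : ℂ[X]} {d : ℕ} (hP : P.natDegree ≤ d)
    (hQ : Q.natDegree ≤ d) (hPQ : ∀ z : ℂ, ‖z‖ = 1 → ‖P.eval z‖ ^ 2 + ‖Q.eval z‖ ^ 2 = 1)
    (m : ℕ) : ‖Q.coeff m‖ ≤ 1 := by
  rcases le_or_gt m d with hm | hm
  · have h := coeffCorrelation_add_coeffCorrelation hP hQ hPQ (n := 0) (by omega)
    rw [coeffCorrelation_zero, coeffCorrelation_zero, if_pos rfl] at h
    have hsum : ∑ k ∈ range (d + 1), ‖P.coeff k‖ ^ 2 + ∑ k ∈ range (d + 1), ‖Q.coeff k‖ ^ 2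
        = 1 := by exact_mod_cast h
    have hPnn : 0 ≤ ∑ k ∈ range (d + 1), ‖P.coeff k‖ ^ 2 := by positivity
    have hQm : ‖Q.coeff m‖ ^ 2 ≤ ∑ k ∈ range (d + 1), ‖Q.coeff k‖ ^ 2 :=
      single_le_sum (f := fun k => ‖Q.coeff k‖ ^ 2) (fun _ _ => by positivity)
        (mem_range.mpr (Nat.lt_succ_of_le hm))
    exact (sq_le_one_iff₀ (norm_nonneg _)).mp (by linarith)
  · simp [coeff_eq_zero_of_natDegree_lt (hQ.trans_lt hm)]

lemma norm_coeffCorrelation_sub_le {A B : ℂ[X]} {ε : ℝ} (hB : ∀ m, ‖B.coeff m‖ ≤ 1)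
    (hAB : ∀ m, ‖(A - B).coeff m‖ ≤ ε) (d : ℕ) (n : ℤ) :
    ‖coeffCorrelation d A n - coeffCorrelation d B n‖ ≤ (d + 1) * ((2 + ε) * ε) := by
  have hB' := norm_coeffExt_le hB
  have hAB' : ∀ j, ‖coeffExt A j - coeffExt B j‖ ≤ ε := fun j => by
    rw [← coeffExt_sub]; exact norm_coeffExt_le hAB j
  rw [coeffCorrelation, coeffCorrelation, ← sum_sub_distrib]
  refine (norm_sum_le _ _).trans ?_
  calc _ ≤ ∑ _m ∈ range (d + 1), (2 + ε) * ε := sum_le_sum fun m _ =>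
        norm_mul_sub_mul_le (hB' _) (by rw [Complex.norm_conj]; exact hB' _) (hAB' _)
          (by rw [← map_sub, Complex.norm_conj]; exact hAB' _)
    _ = (d + 1) * ((2 + ε) * ε) := by simp

lemma iSup_abs_norm_sq_add_norm_sq_sub_one_lt {P Q Q' : ℂ[X]} {d : ℕ} {ε : ℝ}
    (hPQ : ∀ z : ℂ, ‖z‖ = 1 → ‖P.eval z‖ ^ 2 + ‖Q.eval z‖ ^ 2 = 1)
    (hdeg : (Q' - Q).natDegree ≤ d) (hε : ε < 1) (hcoeff : ∀ n ≤ d, ‖(Q' - Q).coeff n‖ < ε) :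
    (⨆ z : {z : ℂ // ‖z‖ = 1}, |‖P.eval z.1‖ ^ 2 + ‖Q'.eval z.1‖ ^ 2 - 1|) <
      (d + 1) * (d + 3) * ε := by
  set S := ∑ n ∈ range (d + 1), ‖(Q' - Q).coeff n‖
  have hS0 : 0 ≤ S := sum_nonneg fun n _ => norm_nonneg _
  have hS : S < (d + 1) * ε := calc
    S < ∑ _n ∈ range (d + 1), ε := sum_lt_sum_of_nonempty nonempty_range_add_one fun n hn =>
        hcoeff n (Nat.lt_succ_iff.mp (mem_range.mp hn))
    _ = (d + 1) * ε := by simp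
  have hSd : S < d + 1 := hS.trans (mul_lt_of_lt_one_right (by positivity) hε)
  calc _ ≤ S * (2 + S) := iSup_abs_norm_sq_add_norm_sq_sub_one_le hPQ fun z hz => by
        rw [← eval_sub]
        exact norm_eval_le_sum_norm_coeff hdeg hz.le
    _ ≤ S * (d + 3) := mul_le_mul_of_nonneg_left (by linarith) hS0
    _ < (d + 1) * ε * (d + 3) := by gcongr
    _ = (d + 1) * (d + 3) * ε := by ring

lemma sqrt_sum_norm_coeffCorrelation_add_sub_lt {P Q Q' : ℂ[X]} {d : ℕ} {ε : ℝ}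
    (hP : P.natDegree ≤ d) (hQ : Q.natDegree ≤ d)
    (hPQ : ∀ z : ℂ, ‖z‖ = 1 → ‖P.eval z‖ ^ 2 + ‖Q.eval z‖ ^ 2 = 1)
    (hε₀ : 0 < ε) (hε₁ : ε < 1) (hcoeff : ∀ n, ‖(Q' - Q).coeff n‖ ≤ ε) :
    √(∑ n ∈ Icc (-(d : ℤ)) d,
        ‖coeffCorrelation d P n + coeffCorrelation d Q' n - if n = 0 then 1 else 0‖ ^ 2) <
      3 * (d + 1) * (2 * d + 1) * ε := by
  have hterm : ∀ n ∈ Icc (-(d : ℤ)) d,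
      ‖coeffCorrelation d P n + coeffCorrelation d Q' n - if n = 0 then 1 else 0‖ ≤
        (d + 1) * ((2 + ε) * ε) := fun n hn => by
    rw [← coeffCorrelation_add_coeffCorrelation hP hQ hPQ (mem_Icc.mp hn).1,
      add_sub_add_left_eq_sub]
    exact norm_coeffCorrelation_sub_le (norm_coeff_le_one_of_complementary hP hQ hPQ) hcoeff d n
  calc _ ≤ #(Icc (-(d : ℤ)) d) * ((d + 1) * ((2 + ε) * ε)) :=
        sqrt_sum_norm_sq_le_card_mul _ _ hterm
    _ = (2 * d + 1) * ((d + 1) * ((2 + ε) * ε)) := by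
        rw [Int.card_Icc, show (d + 1 - -(d : ℤ)).toNat = 2 * d + 1 by omega]; push_cast; ring
    _ < 3 * (d + 1) * (2 * d + 1) * ε := by
        have : (0 : ℝ) < (2 * d + 1) * (d + 1) * ε := by positivity
        nlinarith

theorem error_metric_bounds_general
    (d : ℕ) (ε : ℝ) (hε : ε ∈ Set.Ioo (0 : ℝ) 1)
    (P Q : Polynomial ℂ) (hPdeg : P.natDegree ≤ d) (hQdeg : Q.natDegree ≤ d)
    (hPQ : ∀ z : ℂ, ‖z‖ = 1 →
      ‖P.eval z‖ ^ 2 + ‖Q.eval z‖ ^ 2 = 1)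
    (tq : ℕ → ℂ) (htq : ∀ n : ℕ, n ≤ d → ‖Q.coeff n - tq n‖ < ε)
    (Qt : Polynomial ℂ)
    (hQt : Qt = ∑ n ∈ Finset.range (d + 1), Polynomial.C (tq n) * Polynomial.X ^ n) :
    (⨆ z : {z : ℂ // ‖z‖ = 1},
        |‖P.eval z.1‖ ^ 2 + ‖Qt.eval z.1‖ ^ 2 - 1|) <
      ((d : ℝ) + 1) * ((d : ℝ) + 3) * ε ∧
    Real.sqrt (∑ n ∈ Finset.Icc (-(d : ℤ)) (d : ℤ),
        ‖(∑ m ∈ Finset.range (d + 1),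
            (coeffExt P (n + m) * starRingEnd ℂ (coeffExt P m) +
              coeffExt Qt (n + m) * starRingEnd ℂ (coeffExt Qt m))) -
          if n = 0 then 1 else 0‖ ^ 2) <
      3 * ((d : ℝ) + 1) * (2 * (d : ℝ) + 1) * ε := by
  obtain ⟨hε0, hε1⟩ := hε
  have hQtdeg : Qt.natDegree ≤ d :=
    hQt ▸ natDegree_sum_le_of_forall_le _ _ fun n hn =>
      (natDegree_C_mul_X_pow_le _ _).trans (Nat.lt_succ_iff.mp (mem_range.mp hn))
  have hdeg : (Qt - Q).natDegree ≤ d := (natDegree_sub_le _ _).trans (max_le hQtdeg hQdeg)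
  have hcoeff : ∀ n ≤ d, ‖(Qt - Q).coeff n‖ < ε := fun n hn => by
    rw [coeff_sub, norm_sub_rev, hQt, coeff_sum_range_C_mul_X_pow, if_pos hn]
    exact htq n hn
  refine ⟨iSup_abs_norm_sq_add_norm_sq_sub_one_lt hPQ hdeg hε1 hcoeff, ?_⟩
  simp only [sum_add_distrib]
  refine sqrt_sum_norm_coeffCorrelation_add_sub_lt hPdeg hQdeg hPQ hε0 hε1 fun n => ?_
  rcases le_or_gt n d with hn | hn
  · exact (hcoeff n hn).le
  · simpa [coeff_eq_zero_of_natDegree_lt (hdeg.trans_lt hn)] using hε0.le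

/-- **Propagation of coefficient errors to the error metrics** (Corollary 3). If `P, Q`
are degree-`≤ d` polynomials with `|P|² + |Q|² = 1` on `𝕋` and `q̃₀,…,q̃_d` approximate the
coefficients of `Q` to accuracy `ε` each, then `Q̃(z) = Σ q̃ₙ zⁿ` satisfies
`Φ(P,Q̃) < (d+1)(d+3)ε` and `Φ̃(P,Q̃) < 3(d+1)(2d+1)ε`. -/
theorem error_metric_bounds
    (d : ℕ) (hd : 1 ≤ d) (ε : ℝ) (hε : ε ∈ Set.Ioo (0 : ℝ) 1)
    (P Q : Polynomial ℂ) (hPdeg : P.natDegree ≤ d) (hQdeg : Q.natDegree ≤ d)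
    (hPQ : ∀ z : ℂ, ‖z‖ = 1 →
      ‖P.eval z‖ ^ 2 + ‖Q.eval z‖ ^ 2 = 1)
    (tq : ℕ → ℂ) (htq : ∀ n : ℕ, n ≤ d → ‖Q.coeff n - tq n‖ < ε)
    (Qt : Polynomial ℂ)
    (hQt : Qt = ∑ n ∈ Finset.range (d + 1), Polynomial.C (tq n) * Polynomial.X ^ n) :
    (⨆ z : {z : ℂ // ‖z‖ = 1},
        |‖P.eval z.1‖ ^ 2 + ‖Qt.eval z.1‖ ^ 2 - 1|) <
      ((d : ℝ) + 1) * ((d : ℝ) + 3) * ε ∧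
    Real.sqrt (∑ n ∈ Finset.Icc (-(d : ℤ)) (d : ℤ),
        ‖(∑ m ∈ Finset.range (d + 1),
            (coeffExt P (n + m) * starRingEnd ℂ (coeffExt P m) +
              coeffExt Qt (n + m) * starRingEnd ℂ (coeffExt Qt m))) -
          if n = 0 then 1 else 0‖ ^ 2) <
      3 * ((d : ℝ) + 1) * (2 * (d : ℝ) + 1) * ε :=
  error_metric_bounds_general d ε hε P Q hPdeg hQdeg hPQ tq htq Qt hQt
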